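/- Any length-two Bruhat interval [z,x] in a Coxeter group contains exactly two elements y with z < y < x. -/

import Mathlib

/-!
W acts on `W × ZMod 2`, the simple reflection `s` sending `(t, ε)` to `(s t s, ε + [t = s])`
(the relations hold because in the dihedral subgroup each reflection is hit an even number of
times). The parity that `w` adds to `(t, ε)` is the parity of the number of occurrences of `t` in
the right inversion sequence of any word for `w`; this gives the strong exchange condition, hence
the subword property of the Bruhat order and the lifting property: for a simple reflection `s`,
`u ≤ w` implies `u ≤ s w` or `s u ≤ s w`.

For the theorem, induct on `ℓ x` and pick a left descent `s` of `x`. If `s` is not a descent of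
`z`, the middle elements of `[z, x]` are `s z` and `s x`. If it is, `a ↦ s a`, with `z` sent to
`s x` instead, is a bijection from the middle elements of `[s z, s x]` onto those of `[z, x]`.
-/

open Relation

variable {B : Type*}

/-- One step in the Bruhat order of a Coxeter group: multiply on the right by a
reflection, increasing the length. The Bruhat order is the reflexive-transitive
closure of this relation. -/
def BruhatStep {W : Type*} [Group W] {M : CoxeterMatrix B} (cs : CoxeterSystem M W)
    (a b : W) : Prop :=
  ∃ t : W, cs.IsReflection t ∧ b = a * t ∧ cs.length a < cs.length b

/-- The Bruhat order on a Coxeter group. -/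
def BruhatLE {W : Type*} [Group W] {M : CoxeterMatrix B} (cs : CoxeterSystem M W)
    (a b : W) : Prop :=
  Relation.ReflTransGen (BruhatStep cs) a b

/-- The strict Bruhat order on a Coxeter group. -/
def BruhatLT {W : Type*} [Group W] {M : CoxeterMatrix B} (cs : CoxeterSystem M W)
    (a b : W) : Prop :=
  BruhatLE cs a b ∧ a ≠ b

open List

namespace CoxeterSystem

open scoped Classical

variable {W : Type*} [Group W] {M : CoxeterMatrix B} (cs : CoxeterSystem M W)

local prefix:100 "s" => cs.simple
local prefix:100 "π" => cs.wordProd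
local prefix:100 "ℓ" => cs.length
local prefix:100 "ris" => cs.rightInvSeq

theorem simple_mul_mul_simple_eq_iff (i : B) (v w : W) :
    s i * v * s i = w ↔ v = s i * w * s i := by
  constructor <;> rintro rfl <;> simp [mul_assoc]

theorem simple_mul_mul_simple_eq_simple_iff (i : B) (w : W) : s i * w * s i = s i ↔ w = s i := by
  rw [simple_mul_mul_simple_eq_iff, cs.simple_mul_simple_self, one_mul]

noncomputable def simpleAct (i : B) : Equiv.Perm (W × ZMod 2) :=
  Function.Involutive.toPerm (fun p => (s i * p.1 * s i, p.2 + if p.1 = s i then 1 else 0)) <| by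
    rintro ⟨t, ε⟩
    simp only [simple_mul_mul_simple_eq_simple_iff, add_assoc, ← two_mul]
    simp [mul_assoc, show (2 : ZMod 2) = 0 from rfl]

theorem simpleAct_apply (i : B) (p : W × ZMod 2) :
    cs.simpleAct i p = (s i * p.1 * s i, p.2 + if p.1 = s i then 1 else 0) := rfl

theorem simpleAct_mul_pow_apply (i j : B) (k : ℕ) (p : W × ZMod 2) :
    ((cs.simpleAct i * cs.simpleAct j) ^ k) p =
      ((s i * s j) ^ k * p.1 * ((s i * s j) ^ k)⁻¹,
        p.2 + ∑ r ∈ Finset.range (2 * k), if p.1 = (s j * s i) ^ r * s j then 1 else 0) := by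
  induction k generalizing p with
  | zero => simp
  | succ k ih =>
    obtain ⟨t, ε⟩ := p
    have hconj : ∀ r : ℕ, s i * (s j * t * s j) * s i = (s j * s i) ^ r * s j ↔
        t = (s j * s i) ^ (r + 2) * s j := by
      intro r
      rw [simple_mul_mul_simple_eq_iff, simple_mul_mul_simple_eq_iff, pow_succ, pow_succ,
        (Commute.pow_left rfl r).eq]
      simp only [mul_assoc]
    have hsi : s j * t * s j = s i ↔ t = (s j * s i) ^ 1 * s j := by
      rw [simple_mul_mul_simple_eq_iff, pow_one]
    rw [pow_succ, Equiv.Perm.mul_apply, Equiv.Perm.mul_apply, simpleAct_apply, simpleAct_apply, ih]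
    simp only [mul_add, mul_one, Finset.sum_range_succ' _ (2 * k + 1),
      Finset.sum_range_succ' _ (2 * k), hconj, hsi, zero_add, pow_zero, one_mul]
    refine Prod.ext ?_ ?_
    · simp only [mul_assoc, pow_succ, mul_inv_rev, inv_simple]
    · dsimp only
      ring

theorem isLiftable_simpleAct : M.IsLiftable cs.simpleAct := by
  intro i j
  ext p : 1
  -- the `r`-th and `(M i j + r)`-th summands agree, so the sum is even
  rw [simpleAct_mul_pow_apply, simple_mul_simple_pow, two_mul, Finset.sum_range_add]
  simp [pow_add, CharTwo.add_self_eq_zero]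

noncomputable def reflectionAct : W →* Equiv.Perm (W × ZMod 2) :=
  cs.lift ⟨cs.simpleAct, cs.isLiftable_simpleAct⟩

theorem reflectionAct_wordProd (ω : List B) (p : W × ZMod 2) :
    cs.reflectionAct (π ω) p = (π ω * p.1 * (π ω)⁻¹, p.2 + (ris ω).count p.1) := by
  induction ω generalizing p with
  | nil => simp
  | cons i ω ih =>
    rw [wordProd_cons, map_mul, Equiv.Perm.mul_apply, ih, reflectionAct, lift_apply_simple,
      simpleAct_apply]
    have hconj : π ω * p.1 * (π ω)⁻¹ = s i ↔ (π ω)⁻¹ * s i * π ω = p.1 := by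
      constructor <;> intro h <;> rw [← h] <;> group
    refine Prod.ext ?_ ?_
    · simp [mul_assoc]
    · simp only [rightInvSeq, count_cons, beq_iff_eq, hconj]
      push_cast
      ring

noncomputable def invParity (w t : W) : ZMod 2 := (cs.reflectionAct w (t, 0)).2

theorem invParity_wordProd (ω : List B) (t : W) : cs.invParity (π ω) t = (ris ω).count t := by
  simp [invParity, reflectionAct_wordProd]

theorem reflectionAct_apply (w : W) (p : W × ZMod 2) :
    cs.reflectionAct w p = (w * p.1 * w⁻¹, p.2 + cs.invParity w p.1) := by
  obtain ⟨ω, -, rfl⟩ := cs.exists_isReduced w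
  simp [reflectionAct_wordProd, invParity_wordProd]

theorem invParity_mul (a b t : W) :
    cs.invParity (a * b) t = cs.invParity b t + cs.invParity a (b * t * b⁻¹) := by
  rw [invParity, map_mul, Equiv.Perm.mul_apply, reflectionAct_apply, reflectionAct_apply, zero_add]

@[simp]
theorem invParity_one (t : W) : cs.invParity 1 t = 0 := by
  simp [invParity]

theorem invParity_self {t : W} (ht : cs.IsReflection t) : cs.invParity t t = 1 := by
  obtain ⟨u, i, rfl⟩ := ht
  have h₁ := cs.invParity_mul (u * s i) u⁻¹ (u * s i * u⁻¹)
  have h₂ := cs.invParity_mul u (s i) (s i)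
  have h₃ := cs.invParity_mul u u⁻¹ (u * s i * u⁻¹)
  have hs : cs.invParity (s i) (s i) = 1 := by simpa using cs.invParity_wordProd [i] (s i)
  simp only [mul_assoc, mul_inv_cancel, inv_mul_cancel, inv_mul_cancel_left, inv_inv, mul_one,
    one_mul, inv_simple, simple_mul_simple_self, invParity_one] at h₁ h₂ h₃ ⊢
  linear_combination h₁ + h₂ - h₃ + hs

theorem mem_rightInvSeq_of_invParity_eq_one {ω : List B} {t : W}
    (h : cs.invParity (π ω) t = 1) : t ∈ ris ω := by
  by_contra hmem
  simp [invParity_wordProd, List.count_eq_zero.mpr hmem] at h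

theorem strong_exchange (ω : List B) {t : W} (ht : cs.IsReflection t)
    (hlt : ℓ (π ω * t) < ℓ (π ω)) : ∃ j < ω.length, π ω * t = π (ω.eraseIdx j) := by
  have hpar : cs.invParity (π ω) t = 1 := by
    by_contra h₀
    obtain ⟨γ, hγ, hγω⟩ := cs.exists_isReduced (π ω * t)
    have : cs.invParity (π γ) t = 1 := by
      rw [← hγω, invParity_mul, invParity_self cs ht, ht.mul_self, one_mul, ht.inv]
      exact (by decide : ∀ x : ZMod 2, x ≠ 1 → 1 + x = 1) _ h₀
    have := (cs.isRightInversion_of_mem_rightInvSeq hγ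
      (cs.mem_rightInvSeq_of_invParity_eq_one this)).2
    rw [← hγω, mul_assoc, ht.mul_self, mul_one] at this
    omega
  obtain ⟨j, hj, hjt⟩ := List.getElem_of_mem (cs.mem_rightInvSeq_of_invParity_eq_one hpar)
  refine ⟨j, by simpa using hj, ?_⟩
  rw [← hjt, ← List.getD_eq_getElem _ 1 hj, wordProd_mul_getD_rightInvSeq]

end CoxeterSystem

section BruhatOrder

open CoxeterSystem

variable {W : Type*} [Group W] {M : CoxeterMatrix B} {cs : CoxeterSystem M W} {u v w : W} {i : B}

local prefix:100 "s" => cs.simple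
local prefix:100 "π" => cs.wordProd
local prefix:100 "ℓ" => cs.length

theorem BruhatStep.length_lt (h : BruhatStep cs u w) : ℓ u < ℓ w :=
  let ⟨_, _, _, hlt⟩ := h; hlt

theorem BruhatStep.bruhatLE (h : BruhatStep cs u w) : BruhatLE cs u w := ReflTransGen.single h

theorem BruhatLE.trans (huv : BruhatLE cs u v) (hvw : BruhatLE cs v w) : BruhatLE cs u w :=
  ReflTransGen.trans huv hvw

theorem BruhatLE.length_le (h : BruhatLE cs u w) : ℓ u ≤ ℓ w := by
  induction h with
  | refl => rfl
  | tail _ hstep ih => exact ih.trans hstep.length_lt.le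

theorem BruhatLE.eq_of_length_le (h : BruhatLE cs u w) (hl : ℓ w ≤ ℓ u) : u = w := by
  rcases ReflTransGen.cases_head h with rfl | ⟨v, huv, hvw⟩
  · rfl
  · exact absurd (huv.length_lt.trans_le (BruhatLE.length_le hvw)) (not_lt.mpr hl)

theorem BruhatLT.length_lt (h : BruhatLT cs u w) : ℓ u < ℓ w :=
  h.1.length_le.lt_of_ne fun hl => h.2 (h.1.eq_of_length_le hl.ge)

theorem bruhatStep_simple_mul_of_not_isLeftDescent (hw : ¬cs.IsLeftDescent w i) :
    BruhatStep cs w (s i * w) :=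
  ⟨w⁻¹ * s i * w, by simpa using (cs.isReflection_simple i).conj w⁻¹, by group,
    not_lt.mp hw |>.lt_of_ne (cs.length_simple_mul_ne w i).symm⟩

theorem bruhatStep_of_isLeftDescent (hw : cs.IsLeftDescent w i) : BruhatStep cs (s i * w) w :=
  ⟨w⁻¹ * s i * w, by simpa using (cs.isReflection_simple i).conj w⁻¹, by simp [mul_assoc],
    hw⟩

theorem BruhatLE.exists_sublist_wordProd_eq {ω : List B} (h : BruhatLE cs u (π ω)) :
    ∃ ω', ω' <+ ω ∧ π ω' = u := by
  generalize hw : π ω = w at h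
  induction h generalizing ω with
  | refl => exact ⟨ω, Sublist.refl ω, hw⟩
  | @tail b _ _ hstep ih =>
    obtain ⟨t, ht, rfl, hlt⟩ := hstep
    have hωt : π ω * t = b := by rw [hw, mul_assoc, ht.mul_self, mul_one]
    obtain ⟨j, -, hj⟩ := cs.strong_exchange ω ht (by rwa [hωt, hw])
    obtain ⟨ω', hω', rfl⟩ := ih (hj.symm.trans hωt)
    exact ⟨ω', hω'.trans (eraseIdx_sublist ω j), rfl⟩

theorem BruhatStep.simple_mul_eq_of_length_lt (h : BruhatStep cs u w)
    (hu : ¬cs.IsLeftDescent u i) (hw : ℓ (s i * w) < ℓ (s i * u)) : s i * u = w := by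
  have hu' := cs.not_isLeftDescent_iff.mp hu
  have hw' : ℓ (s i * w) = ℓ u := by
    have := h.length_lt
    rcases cs.length_simple_mul w i with h | h <;> omega
  obtain ⟨γ, hγ, hγw⟩ := cs.exists_isReduced (s i * w)
  have hγlen : γ.length = ℓ u := by rw [← hw', hγw, hγ]
  obtain ⟨ω', hω', rfl⟩ := BruhatLE.exists_sublist_wordProd_eq (cs := cs) (ω := i :: γ)
    (by rw [wordProd_cons, ← hγw, simple_mul_simple_cancel_left]; exact h.bruhatLE)
  rcases sublist_cons_iff.mp hω' with hω' | ⟨r, rfl, hr⟩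
  · have := cs.length_wordProd_le ω'
    rw [hω'.eq_of_length (le_antisymm hω'.length_le (by omega)), ← hγw,
      simple_mul_simple_cancel_left]
  · simp only [wordProd_cons, simple_mul_simple_cancel_left] at hu' hγlen
    have := cs.length_wordProd_le r
    have := hr.length_le
    omega

theorem BruhatStep.simple_mul_le_or (h : BruhatStep cs u w) (i : B) :
    BruhatLE cs (s i * u) w ∨ BruhatLE cs (s i * u) (s i * w) := by
  by_cases hu : cs.IsLeftDescent u i
  · exact Or.inl ((bruhatStep_of_isLeftDescent hu).bruhatLE.trans h.bruhatLE)
  obtain ⟨t, ht, rfl, -⟩ := id h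
  rcases (ht.length_mul_left_ne (s i * u)).lt_or_gt with hlt | hgt
  · exact Or.inl (h.simple_mul_eq_of_length_lt hu (by rwa [← mul_assoc]) ▸ ReflTransGen.refl)
  · exact Or.inr (ReflTransGen.single ⟨t, ht, by rw [mul_assoc], by rwa [← mul_assoc]⟩)

theorem BruhatLE.simple_mul_le_or (h : BruhatLE cs u w) (i : B) :
    BruhatLE cs (s i * u) w ∨ BruhatLE cs (s i * u) (s i * w) := by
  induction h using ReflTransGen.head_induction_on with
  | refl => exact Or.inr ReflTransGen.refl
  | head huv hvw ih =>
    rcases huv.simple_mul_le_or i with h | h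
    · exact Or.inl (h.trans hvw)
    · exact ih.imp h.trans h.trans

theorem BruhatLE.simple_mul_le_simple_mul_of_not_isLeftDescent (h : BruhatLE cs u w)
    (hw : ¬cs.IsLeftDescent w i) : BruhatLE cs (s i * u) (s i * w) :=
  (h.simple_mul_le_or i).elim
    (fun h' => h'.trans (bruhatStep_simple_mul_of_not_isLeftDescent hw).bruhatLE) id

theorem BruhatLE.simple_mul_le_of_isLeftDescent (h : BruhatLE cs u w)
    (hw : cs.IsLeftDescent w i) : BruhatLE cs (s i * u) w :=
  (h.simple_mul_le_or i).elim id (fun h' => h'.trans (bruhatStep_of_isLeftDescent hw).bruhatLE)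

theorem CoxeterSystem.IsReduced.not_isLeftDescent_of_cons {ω : List B}
    (hω : cs.IsReduced (i :: ω)) : ¬cs.IsLeftDescent (π ω) i := by
  have hlen : ℓ (s i * π ω) = ω.length + 1 := by rw [← wordProd_cons]; exact hω
  have := cs.length_wordProd_le ω
  unfold IsLeftDescent
  omega

theorem bruhatLE_wordProd_of_sublist {ω' ω : List B} (h : ω' <+ ω) (hω : cs.IsReduced ω) :
    BruhatLE cs (π ω') (π ω) := by
  induction h with
  | slnil => exact ReflTransGen.refl
  | @cons _ l i _ ih =>
    have hl : cs.IsReduced l := by simpa using hω.drop 1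
    have hi := hω.not_isLeftDescent_of_cons
    rw [wordProd_cons]
    exact (ih hl).trans (bruhatStep_simple_mul_of_not_isLeftDescent hi).bruhatLE
  | @cons_cons _ l i _ ih =>
    have hl : cs.IsReduced l := by simpa using hω.drop 1
    have hi := hω.not_isLeftDescent_of_cons
    rw [wordProd_cons, wordProd_cons]
    exact BruhatLE.simple_mul_le_simple_mul_of_not_isLeftDescent (ih hl) hi

theorem BruhatLE.le_or_simple_mul_le_simple_mul (h : BruhatLE cs u w) (i : B) :
    BruhatLE cs u (s i * w) ∨ BruhatLE cs (s i * u) (s i * w) := by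
  -- `i :: γ` is a word for `w`, reduced or not, and `γ` is reduced
  obtain ⟨γ, hγ, hγw⟩ := cs.exists_isReduced (s i * w)
  obtain ⟨ω', hω', rfl⟩ := BruhatLE.exists_sublist_wordProd_eq (cs := cs) (ω := i :: γ)
    (by rwa [wordProd_cons, ← hγw, simple_mul_simple_cancel_left])
  rw [hγw]
  rcases sublist_cons_iff.mp hω' with hω' | ⟨r, rfl, hr⟩
  · exact Or.inl (bruhatLE_wordProd_of_sublist hω' hγ)
  · right
    rw [wordProd_cons, simple_mul_simple_cancel_left]
    exact bruhatLE_wordProd_of_sublist hr hγ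

theorem BruhatLE.le_simple_mul_of_not_isLeftDescent (h : BruhatLE cs u w)
    (hu : ¬cs.IsLeftDescent u i) : BruhatLE cs u (s i * w) :=
  (h.le_or_simple_mul_le_simple_mul i).elim id
    ((bruhatStep_simple_mul_of_not_isLeftDescent hu).bruhatLE.trans)

theorem BruhatLE.simple_mul_le_simple_mul_of_isLeftDescent (h : BruhatLE cs u w)
    (hu : cs.IsLeftDescent u i) : BruhatLE cs (s i * u) (s i * w) :=
  (h.le_or_simple_mul_le_simple_mul i).elim (bruhatStep_of_isLeftDescent hu).bruhatLE.trans id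

end BruhatOrder

section LengthTwoIntervals

open CoxeterSystem

variable {W : Type*} [Group W] {M : CoxeterMatrix B} {cs : CoxeterSystem M W} {z x y a : W} {i : B}

local prefix:100 "s" => cs.simple
local prefix:100 "ℓ" => cs.length

variable (cs) in
def bruhatIoo (z x : W) : Set W := {y | BruhatLT cs z y ∧ BruhatLT cs y x}

theorem mem_bruhatIoo_iff (hlen : ℓ x = ℓ z + 2) :
    y ∈ bruhatIoo cs z x ↔ BruhatLE cs z y ∧ BruhatLE cs y x ∧ ℓ y = ℓ z + 1 := by
  constructor
  · rintro ⟨hzy, hyx⟩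
    have := hzy.length_lt
    have := hyx.length_lt
    exact ⟨hzy.1, hyx.1, by omega⟩
  · rintro ⟨hzy, hyx, hy⟩
    exact ⟨⟨hzy, by rintro rfl; omega⟩, ⟨hyx, by rintro rfl; omega⟩⟩

theorem bruhatIoo_eq_pair_of_not_isLeftDescent (hle : BruhatLE cs z x) (hlen : ℓ x = ℓ z + 2)
    (hx : cs.IsLeftDescent x i) (hz : ¬cs.IsLeftDescent z i) :
    bruhatIoo cs z x = {s i * z, s i * x} := by
  have hx' := cs.isLeftDescent_iff.mp hx
  have hz' := cs.not_isLeftDescent_iff.mp hz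
  ext y
  rw [mem_bruhatIoo_iff hlen, Set.mem_insert_iff, Set.mem_singleton_iff]
  constructor
  · rintro ⟨hzy, hyx, hy⟩
    by_cases hyi : cs.IsLeftDescent y i
    · left
      have hyi' := cs.isLeftDescent_iff.mp hyi
      rw [(hzy.le_simple_mul_of_not_isLeftDescent hz).eq_of_length_le (by omega),
        simple_mul_simple_cancel_left]
    · right
      exact (hyx.le_simple_mul_of_not_isLeftDescent hyi).eq_of_length_le (by omega)
  · rintro (rfl | rfl)
    · exact ⟨(bruhatStep_simple_mul_of_not_isLeftDescent hz).bruhatLE,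
        hle.simple_mul_le_of_isLeftDescent hx, hz'⟩
    · exact ⟨hle.le_simple_mul_of_not_isLeftDescent hz,
        (bruhatStep_of_isLeftDescent hx).bruhatLE, by omega⟩

theorem simple_mul_mem_bruhatIoo (hlen : ℓ x = ℓ z + 2) (hx : cs.IsLeftDescent x i)
    (hz : cs.IsLeftDescent z i) (ha : a ∈ bruhatIoo cs (s i * z) (s i * x)) (haz : a ≠ z) :
    s i * a ∈ bruhatIoo cs z x := by
  have hx' := cs.isLeftDescent_iff.mp hx
  have hz' := cs.isLeftDescent_iff.mp hz
  obtain ⟨hza, hax, ha'⟩ := (mem_bruhatIoo_iff (by omega)).mp ha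
  have hai : ¬cs.IsLeftDescent a i := by
    intro hai
    have := hza.simple_mul_le_of_isLeftDescent hai
    rw [simple_mul_simple_cancel_left] at this
    exact haz (this.eq_of_length_le (by omega)).symm
  have hai' := cs.not_isLeftDescent_iff.mp hai
  refine (mem_bruhatIoo_iff hlen).mpr ⟨?_, ?_, by omega⟩
  · simpa using hza.simple_mul_le_simple_mul_of_not_isLeftDescent hai
  · simpa using hax.simple_mul_le_simple_mul_of_not_isLeftDescent
      (cs.isLeftDescent_iff_not_isLeftDescent_mul.mp hx)

theorem simple_mul_mem_bruhatIoo_simple_mul (hlen : ℓ x = ℓ z + 2) (hx : cs.IsLeftDescent x i)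
    (hz : cs.IsLeftDescent z i) (hy : y ∈ bruhatIoo cs z x) (hyi : cs.IsLeftDescent y i) :
    s i * y ∈ bruhatIoo cs (s i * z) (s i * x) := by
  have hx' := cs.isLeftDescent_iff.mp hx
  have hz' := cs.isLeftDescent_iff.mp hz
  have hyi' := cs.isLeftDescent_iff.mp hyi
  obtain ⟨hzy, hyx, hy'⟩ := (mem_bruhatIoo_iff hlen).mp hy
  exact (mem_bruhatIoo_iff (by omega)).mpr ⟨hzy.simple_mul_le_simple_mul_of_isLeftDescent hz,
    hyx.simple_mul_le_simple_mul_of_isLeftDescent hyi, by omega⟩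

theorem eq_simple_mul_of_mem_bruhatIoo (hlen : ℓ x = ℓ z + 2) (hx : cs.IsLeftDescent x i)
    (hy : y ∈ bruhatIoo cs z x) (hyi : ¬cs.IsLeftDescent y i) : y = s i * x := by
  have hx' := cs.isLeftDescent_iff.mp hx
  obtain ⟨-, hyx, hy'⟩ := (mem_bruhatIoo_iff hlen).mp hy
  exact (hyx.le_simple_mul_of_not_isLeftDescent hyi).eq_of_length_le (by omega)

theorem ncard_bruhatIoo_simple_mul (hlen : ℓ x = ℓ z + 2)
    (hx : cs.IsLeftDescent x i) (hz : cs.IsLeftDescent z i) :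
    (bruhatIoo cs (s i * z) (s i * x)).ncard = (bruhatIoo cs z x).ncard := by
  classical
  have hx' := cs.isLeftDescent_iff.mp hx
  have hz' := cs.isLeftDescent_iff.mp hz
  have hlen' : ℓ (s i * x) = ℓ (s i * z) + 2 := by omega
  have hzx : z ∈ bruhatIoo cs (s i * z) (s i * x) ↔ s i * x ∈ bruhatIoo cs z x := by
    rw [mem_bruhatIoo_iff hlen, mem_bruhatIoo_iff hlen']
    exact ⟨fun ⟨_, h, _⟩ => ⟨h, (bruhatStep_of_isLeftDescent hx).bruhatLE, by omega⟩,
      fun ⟨h, _, _⟩ => ⟨(bruhatStep_of_isLeftDescent hz).bruhatLE, h, by omega⟩⟩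
  refine Set.ncard_congr (fun a _ => if a = z then s i * x else s i * a) ?_ ?_ ?_
  · intro a ha
    split_ifs with haz
    · exact hzx.mp (haz ▸ ha)
    · exact simple_mul_mem_bruhatIoo hlen hx hz ha haz
  · intro a b ha hb hab
    have hlx : ∀ c ∈ bruhatIoo cs (s i * z) (s i * x), c ≠ x := by
      rintro c hc rfl
      have := ((mem_bruhatIoo_iff hlen').mp hc).2.2
      omega
    split_ifs at hab with haz hbz
    · rw [haz, hbz]
    · exact absurd (mul_left_cancel hab).symm (hlx b hb)
    · exact absurd (mul_left_cancel hab) (hlx a ha)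
    · exact mul_left_cancel hab
  · intro y hy
    by_cases hyi : cs.IsLeftDescent y i
    · have hyz : s i * y ≠ z := fun h =>
        cs.isLeftDescent_iff_not_isLeftDescent_mul.mp hyi (h ▸ hz)
      refine ⟨s i * y, simple_mul_mem_bruhatIoo_simple_mul hlen hx hz hy hyi, ?_⟩
      simp only [if_neg hyz, simple_mul_simple_cancel_left]
    · obtain rfl := eq_simple_mul_of_mem_bruhatIoo hlen hx hy hyi
      exact ⟨z, hzx.mpr hy, if_pos rfl⟩

theorem ncard_bruhatIoo_of_length_eq_add_two (hle : BruhatLE cs z x) (hlen : ℓ x = ℓ z + 2) :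
    (bruhatIoo cs z x).ncard = 2 := by
  induction hn : ℓ x using Nat.strong_induction_on generalizing z x with
  | _ n ih =>
  obtain ⟨i, hx⟩ := cs.exists_leftDescent_of_ne_one (w := x) (by rintro rfl; simp at hlen)
  have hx' := cs.isLeftDescent_iff.mp hx
  by_cases hz : cs.IsLeftDescent z i
  · have hz' := cs.isLeftDescent_iff.mp hz
    rw [← ncard_bruhatIoo_simple_mul hlen hx hz]
    exact ih _ (by omega) (hle.simple_mul_le_simple_mul_of_isLeftDescent hz) (by omega) rfl
  · rw [bruhatIoo_eq_pair_of_not_isLeftDescent hle hlen hx hz, Set.ncard_pair]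
    intro h
    rw [mul_left_cancel h] at hlen
    omega

end LengthTwoIntervals

/-- Any length-two Bruhat interval `[z,x]` in a Coxeter group contains
exactly two elements `y` with `z < y < x`. -/
theorem length_two_bruhat_interval_has_exactly_two_middle_elements
    {W : Type*} [Group W] {M : CoxeterMatrix B} (cs : CoxeterSystem M W)
    (z x : W) (hle : BruhatLE cs z x) (hlen : cs.length x = cs.length z + 2) :
    ∃ y₁ y₂ : W, y₁ ≠ y₂ ∧
      {y : W | BruhatLT cs z y ∧ BruhatLT cs y x} = {y₁, y₂} :=
  Set.ncard_eq_two.mp (ncard_bruhatIoo_of_length_eq_add_two hle hlen)
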